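/- arXiv:1911.03551 — 6 statements merged into one kernel-verified Lean document; each statement's English description precedes it below -/
import Mathlib

section
/- Let A be a nontrivial commutative ring, let F ∈ A[y] be a monic polynomial of degree d, and let N be a positive divisor of d such that the image of N in A is a unit. Then there exists a unique monic polynomial ψ ∈ A[y] of degree d/N such that deg(F − ψ^N) < d − d/N. (This ψ is called the N-th approximate root of F.) -/
open Polynomial Finset

private lemma ar_aux_mul_lt {A : Type*} [CommRing A] {p q : A[X]} {a b : ℕ}
    (hp : p.degree < (a : WithBot ℕ)) (hq : q.degree ≤ (b : WithBot ℕ)) :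
    (p * q).degree < ((a + b : ℕ) : WithBot ℕ) := by
  by_cases hpq : p * q = 0
  · rw [hpq, degree_zero]
    exact bot_lt_iff_ne_bot.mpr (by exact_mod_cast WithBot.coe_ne_bot)
  · have hp0 : p ≠ 0 := fun h => hpq (by simp [h])
    have hq0 : q ≠ 0 := fun h => hpq (by simp [h])
    have h1 : p.natDegree < a := (natDegree_lt_iff_degree_lt hp0).mpr hp
    have h2 : q.natDegree ≤ b := natDegree_le_iff_degree_le.mpr hq
    have h3 : (p * q).natDegree < a + b :=
      lt_of_le_of_lt natDegree_mul_le (by omega)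
    rw [degree_eq_natDegree hpq]
    exact_mod_cast h3

private lemma ar_monic_sub_X_pow {A : Type*} [CommRing A] [Nontrivial A]
    {ψ : A[X]} (h : ψ.Monic) {n : ℕ} (hd : ψ.natDegree = n) :
    (ψ - X ^ n).degree < (n : WithBot ℕ) := by
  have h1 : ψ.degree = (X ^ n : A[X]).degree := by
    rw [degree_X_pow, degree_eq_natDegree h.ne_zero, hd]
  have := degree_sub_lt h1 h.ne_zero (by rw [h.leadingCoeff, (monic_X_pow n).leadingCoeff])
  rwa [degree_eq_natDegree h.ne_zero, hd] at this

/-- **Existence and uniqueness of the N-th approximate root.**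
Let `A` be a nontrivial commutative ring, `F ∈ A[y]` monic of degree `d`, and `N` a
positive divisor of `d` whose image in `A` is a unit. Then there is a unique monic
polynomial `ψ` of degree `d / N` with `deg (F - ψ ^ N) < d - d / N`. -/
theorem approximate_root_exists_unique {A : Type*} [CommRing A] [Nontrivial A]
    (F : A[X]) (d N : ℕ) (hF : F.Monic) (hFd : F.natDegree = d)
    (hN : 0 < N) (hdvd : N ∣ d) (hunit : IsUnit (N : A)) :
    ∃! ψ : A[X], ψ.Monic ∧ ψ.natDegree = d / N ∧
      (F - ψ ^ N).degree < ((d - d / N : ℕ) : WithBot ℕ) := by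
  set e := d / N with he
  have hd : e * N = d := Nat.div_mul_cancel hdvd
  have hed : e ≤ d := Nat.div_le_self d N
  obtain ⟨v, hv⟩ := hunit.exists_right_inv
  -- Existence by successive approximation
  have key : ∀ j : ℕ, j ≤ e → ∃ ψ : A[X], ψ.Monic ∧ ψ.natDegree = e ∧
      (F - ψ ^ N).degree < ((d - j : ℕ) : WithBot ℕ) := by
    intro j hj
    induction j with
    | zero =>
      refine ⟨X ^ e, monic_X_pow e, by simp, ?_⟩
      have : (X ^ e : A[X]) ^ N = X ^ d := by rw [← pow_mul, hd]
      rw [this, Nat.sub_zero, ← hFd]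
      exact ar_monic_sub_X_pow hF rfl
    | succ j ih =>
      obtain ⟨ψ, hψm, hψd, hψ⟩ := ih (by omega)
      have hje : j + 1 ≤ e := hj
      set c := (F - ψ ^ N).coeff (d - (j + 1)) with hc
      set u := v * c with hu
      set m := e - (j + 1) with hm
      set t := C u * X ^ m with ht
      have hjd : j + 1 ≤ d := le_trans hje hed
      have htdeg : t.degree ≤ (m : WithBot ℕ) := by
        calc t.degree ≤ (C u).degree + (X ^ m : A[X]).degree := degree_mul_le _ _
          _ ≤ 0 + (m : WithBot ℕ) := add_le_add degree_C_le (le_of_eq (degree_X_pow m))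
          _ = (m : WithBot ℕ) := zero_add _
      have htlt : t.degree < ψ.degree := by
        rw [degree_eq_natDegree hψm.ne_zero, hψd]
        refine lt_of_le_of_lt htdeg ?_
        exact_mod_cast (show m < e by omega)
      have hN1 : N - 1 + 1 = N := Nat.succ_pred_eq_of_pos hN
      have harith : e * (N - 1) + m = d - (j + 1) := by
        have h6 : e * (N - 1) = d - e := by
          rw [mul_comm, Nat.sub_mul, one_mul, mul_comm, hd]
        rw [h6]; omega
      have hexp : (ψ + t) ^ N =
          (∑ k ∈ range (N - 1), ψ ^ k * t ^ (N - k) * (N.choose k : A[X]))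
          + (N : A[X]) * ψ ^ (N - 1) * t + ψ ^ N := by
        have h1 : N + 1 = (N - 1) + 1 + 1 := by omega
        rw [add_pow, h1, sum_range_succ, sum_range_succ]
        have h2 : N - (N - 1) = 1 := by omega
        have h4 : N.choose (N - 1) = N := by
          obtain ⟨n, rfl⟩ : ∃ n, N = n + 1 := ⟨N - 1, by omega⟩
          simp [Nat.choose_succ_self_right]
        simp only [hN1, h2, h4, Nat.sub_self, pow_zero, pow_one, Nat.choose_self,
          Nat.cast_one, mul_one]
        ring
      have hNt : (N : A[X]) * C u = C c := by
        rw [← map_natCast (C : A →+* A[X]) N, ← C_mul, hu, ← mul_assoc, hv, one_mul]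
      have h5 : (N : A[X]) * ψ ^ (N - 1) * t
          = C c * (ψ ^ (N - 1) - X ^ (e * (N - 1))) * X ^ m + C c * X ^ (d - (j + 1)) := by
        rw [← harith, pow_add, ht, ← hNt]
        ring
      have hrw : F - (ψ + t) ^ N =
          ((F - ψ ^ N) - C c * X ^ (d - (j + 1)))
          - C c * (ψ ^ (N - 1) - X ^ (e * (N - 1))) * X ^ m
          - (∑ k ∈ range (N - 1), ψ ^ k * t ^ (N - k) * (N.choose k : A[X])) := by
        rw [hexp, h5]; ring
      have hP1 : ((F - ψ ^ N) - C c * X ^ (d - (j + 1))).degree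
          < ((d - (j + 1) : ℕ) : WithBot ℕ) := by
        rw [degree_lt_iff_coeff_zero]
        intro i hi
        rw [coeff_sub, coeff_C_mul, coeff_X_pow]
        rcases eq_or_lt_of_le hi with h | h
        · rw [← h, if_pos rfl, mul_one, ← hc, sub_self]
        · rw [if_neg (by omega), mul_zero, sub_zero]
          exact (degree_lt_iff_coeff_zero _ _).mp hψ i (by omega)
      have hsub : (ψ ^ (N - 1) - X ^ (e * (N - 1))).degree
          < ((e * (N - 1) : ℕ) : WithBot ℕ) :=
        ar_monic_sub_X_pow (hψm.pow _) (by rw [hψm.natDegree_pow, hψd, mul_comm])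
      have hP2 : (C c * (ψ ^ (N - 1) - X ^ (e * (N - 1))) * X ^ m).degree
          < ((d - (j + 1) : ℕ) : WithBot ℕ) := by
        have h1 : ((ψ ^ (N - 1) - X ^ (e * (N - 1))) * C c).degree
            < ((e * (N - 1) + 0 : ℕ) : WithBot ℕ) :=
          ar_aux_mul_lt hsub (by simpa using degree_C_le)
        have h2 := ar_aux_mul_lt (b := m) h1 (le_of_eq (degree_X_pow m))
        have h3 : C c * (ψ ^ (N - 1) - X ^ (e * (N - 1))) * X ^ m
            = (ψ ^ (N - 1) - X ^ (e * (N - 1))) * C c * X ^ m := by ring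
        rw [h3]
        rwa [show e * (N - 1) + 0 + m = d - (j + 1) by
          rw [Nat.add_zero]; exact harith] at h2
      have hP3 : (∑ k ∈ range (N - 1), ψ ^ k * t ^ (N - k) * (N.choose k : A[X])).degree
          < ((d - (j + 1) : ℕ) : WithBot ℕ) := by
        refine lt_of_le_of_lt (degree_sum_le _ _)
          ((Finset.sup_lt_iff (bot_lt_iff_ne_bot.mpr
            (by exact_mod_cast WithBot.coe_ne_bot))).mpr ?_)
        intro k hk
        have hk' : k < N - 1 := mem_range.mp hk
        have hnd : (ψ ^ k * t ^ (N - k) * (N.choose k : A[X])).natDegree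
            ≤ k * e + (N - k) * m := by
          refine le_trans natDegree_mul_le ?_
          have h1 : (ψ ^ k).natDegree ≤ k * e := by
            simpa [hψd] using natDegree_pow_le (p := ψ) (n := k)
          have h2 : (t ^ (N - k)).natDegree ≤ (N - k) * m := by
            refine le_trans natDegree_pow_le ?_
            exact Nat.mul_le_mul_left _ (natDegree_le_iff_degree_le.mpr htdeg)
          have h3 : ((N.choose k : A[X])).natDegree = 0 := natDegree_natCast _
          rw [h3, Nat.add_zero]
          exact le_trans natDegree_mul_le (Nat.add_le_add h1 h2)
        have hnat : k * e + (N - k) * m < d - (j + 1) := by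
          rw [← harith]
          have hNk : N - k = (N - 1 - k) + 1 := by omega
          rw [hNk, Nat.add_mul, one_mul]
          have hmlt : (N - 1 - k) * m < (N - 1 - k) * e :=
            mul_lt_mul_of_pos_left (show m < e by omega) (show 0 < N - 1 - k by omega)
          have hsplit : k * e + (N - 1 - k) * e = e * (N - 1) := by
            rw [← Nat.add_mul, show k + (N - 1 - k) = N - 1 by omega, Nat.mul_comm]
          linarith
        calc (ψ ^ k * t ^ (N - k) * (N.choose k : A[X])).degree
            ≤ ((ψ ^ k * t ^ (N - k) * (N.choose k : A[X])).natDegree : WithBot ℕ) :=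
              degree_le_natDegree
          _ ≤ ((k * e + (N - k) * m : ℕ) : WithBot ℕ) := by exact_mod_cast hnd
          _ < ((d - (j + 1) : ℕ) : WithBot ℕ) := by exact_mod_cast hnat
      refine ⟨ψ + t, hψm.add_of_left htlt,
        (natDegree_eq_of_degree_eq (degree_add_eq_left_of_degree_lt htlt)).trans hψd, ?_⟩
      rw [hrw]
      exact lt_of_le_of_lt (degree_sub_le _ _)
        (max_lt (lt_of_le_of_lt (degree_sub_le _ _) (max_lt hP1 hP2)) hP3)
  obtain ⟨ψ, hψm, hψd, hψ⟩ := key e le_rfl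
  refine ⟨ψ, ⟨hψm, hψd, hψ⟩, ?_⟩
  -- Uniqueness
  rintro φ ⟨hφm, hφd, hφ⟩
  by_contra hne
  have hδ : φ - ψ ≠ 0 := sub_ne_zero.mpr hne
  set S : A[X] := ∑ i ∈ range N, φ ^ i * ψ ^ (N - 1 - i) with hS
  have hterm : ∀ i ∈ range N, (φ ^ i * ψ ^ (N - 1 - i)).Monic ∧
      (φ ^ i * ψ ^ (N - 1 - i)).natDegree = d - e := by
    intro i hi
    have hi' : i < N := mem_range.mp hi
    have hmon : (φ ^ i * ψ ^ (N - 1 - i)).Monic := (hφm.pow i).mul (hψm.pow _)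
    refine ⟨hmon, ?_⟩
    rw [natDegree_mul' (by rw [(hφm.pow i).leadingCoeff, (hψm.pow _).leadingCoeff]; simp),
      hφm.natDegree_pow, hψm.natDegree_pow, hφd, hψd]
    have : i * e + (N - 1 - i) * e = (N - 1) * e := by
      rw [← Nat.add_mul]; congr 1; omega
    rw [this]
    have : (N - 1) * e = e * N - e := by
      rw [Nat.sub_mul, one_mul, Nat.mul_comm]
    rw [this, hd]
  have hScoeff : S.coeff (d - e) = (N : A) := by
    rw [hS, finset_sum_coeff]
    have : ∀ i ∈ range N, (φ ^ i * ψ ^ (N - 1 - i)).coeff (d - e) = 1 := by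
      intro i hi
      obtain ⟨hmon, hdeg⟩ := hterm i hi
      rw [← hdeg, coeff_natDegree, hmon.leadingCoeff]
    rw [Finset.sum_congr rfl this]
    simp
  have hSdeg : S.natDegree ≤ d - e := natDegree_sum_le_of_forall_le _ _
    (fun i hi => le_of_eq (hterm i hi).2)
  have hSne : S ≠ 0 := fun h => by
    have : (0 : A) = (N : A) := by rw [← hScoeff, h]; simp
    exact (hunit.ne_zero) this.symm
  have hSlead : S.leadingCoeff = (N : A) ∧ S.natDegree = d - e := by
    have hle : S.natDegree = d - e := by
      rcases lt_or_eq_of_le hSdeg with h | h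
      · exact absurd (coeff_eq_zero_of_natDegree_lt h ▸ hScoeff).symm hunit.ne_zero
      · exact h
    exact ⟨by rw [← coeff_natDegree, hle, hScoeff], hle⟩
  have hmul : S * (φ - ψ) = φ ^ N - ψ ^ N := geom_sum₂_mul φ ψ N
  have hlc : S.leadingCoeff * (φ - ψ).leadingCoeff ≠ 0 := by
    rw [hSlead.1]
    intro h
    have : (φ - ψ).leadingCoeff = 0 := by
      have := congrArg (v * ·) h
      simp only [mul_zero] at this
      rwa [← mul_assoc, mul_comm v (N : A), hv, one_mul] at this
    exact leadingCoeff_ne_zero.mpr hδ this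
  have hdegmul : (S * (φ - ψ)).degree = S.degree + (φ - ψ).degree := degree_mul' hlc
  have hge : ((d - e : ℕ) : WithBot ℕ) ≤ (φ ^ N - ψ ^ N).degree := by
    rw [← hmul, hdegmul, degree_eq_natDegree hSne, hSlead.2]
    exact le_add_of_nonneg_right (zero_le_degree_iff.mpr hδ)
  have hlt : (φ ^ N - ψ ^ N).degree < ((d - e : ℕ) : WithBot ℕ) := by
    have : φ ^ N - ψ ^ N = (F - ψ ^ N) - (F - φ ^ N) := by ring
    rw [this]
    exact lt_of_le_of_lt (degree_sub_le _ _) (max_lt hψ hφ)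
  exact absurd (lt_of_le_of_lt hge hlt) (lt_irrefl _)
end

section
/- Let A be a nontrivial commutative ring, let F ∈ A[y] be a monic polynomial of degree d, let N be a positive divisor of d, and let ψ ∈ A[y] be monic of degree m = d/N. Suppose F = Σ_{i=0}^{N} a_i ψ^i where a_i ∈ A[y] satisfy deg a_i < m for all i < N and a_N = 1 (the ψ-adic expansion of F). Then deg(F − ψ^N) < d − m if and only if a_{N−1} = 0. In other words, ψ is the N-th approximate root of F if and only if the coefficient of ψ^{N−1} in the ψ-adic expansion of F vanishes. -/
/-!
Since `a_N = 1`, `F - ψ ^ N = Σ_{i<N} a_i ψ ^ i`. Because `deg a_i < m`, the terms with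
`i < N - 1` have degree `< (N - 1) m = d - m`, whereas, `ψ` being monic, `a_{N-1} ψ ^ (N-1)`
has degree `≥ (N - 1) m` as soon as `a_{N-1} ≠ 0`.
-/

open Polynomial Finset

namespace Polynomial

variable {R : Type*}

section Semiring

variable [Semiring R]

theorem degree_mul_pow_lt_of_degree_lt {p ψ : R[X]} {m : ℕ} (hp : p.degree < m)
    (hψ : ψ.natDegree ≤ m) (i : ℕ) : (p * ψ ^ i).degree < ((i + 1) * m : ℕ) :=
  calc (p * ψ ^ i).degree ≤ p.degree + (ψ ^ i).degree := degree_mul_le p _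
    _ ≤ p.degree + (i * m : ℕ) := by
      gcongr; exact degree_le_of_natDegree_le (natDegree_pow_le_of_le i hψ)
    _ < (m : WithBot ℕ) + (i * m : ℕ) := WithBot.add_lt_add_right (WithBot.coe_ne_bot) hp
    _ = ((i + 1) * m : ℕ) := by push_cast; ring

theorem degree_sum_mul_pow_lt {ψ : R[X]} {m : ℕ} (hψ : ψ.natDegree ≤ m) {a : ℕ → R[X]} :
    ∀ {n : ℕ}, (∀ i < n, (a i).degree < m) → (∑ i ∈ range n, a i * ψ ^ i).degree < (n * m : ℕ)
  | 0, _ => by simp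
  | n + 1, ha => by
    rw [sum_range_succ]
    refine (degree_add_le _ _).trans_lt (max_lt ?_ ?_)
    · exact (degree_sum_mul_pow_lt hψ fun i hi => ha i (by omega)).trans_le
        (by gcongr; omega)
    · exact degree_mul_pow_lt_of_degree_lt (ha n n.lt_succ_self) hψ n

theorem Monic.degree_mul_lt_natDegree_iff {p q : R[X]} (hq : q.Monic) :
    (p * q).degree < q.natDegree ↔ p = 0 := by
  refine ⟨fun h => by_contra fun hp => h.not_ge ?_, by rintro rfl; simp⟩
  have : Nontrivial R := Nontrivial.of_polynomial_ne hp
  rw [hq.degree_mul, degree_eq_natDegree hp, degree_eq_natDegree hq.ne_zero]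
  exact_mod_cast Nat.le_add_left _ _

end Semiring

theorem degree_add_lt_iff_of_degree_lt [Ring R] {p q : R[X]} {n : WithBot ℕ} (hp : p.degree < n) :
    (p + q).degree < n ↔ q.degree < n := by
  refine ⟨fun h => ?_, fun h => (degree_add_le _ _).trans_lt (max_lt hp h)⟩
  simpa using (degree_sub_le (p + q) p).trans_lt (max_lt h hp)

end Polynomial

theorem approximate_root_iff_coeff_vanishes_general {A : Type*} [CommRing A]
    (F ψ : A[X]) (d N m : ℕ) (a : ℕ → A[X])
    (hN : 0 < N) (hdvd : N ∣ d) (hm : m = d / N)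
    (hψ : ψ.Monic) (hψd : ψ.natDegree = m)
    (hexp : F = ∑ i ∈ Finset.range (N + 1), a i * ψ ^ i)
    (hdeg : ∀ i < N, (a i).degree < (m : WithBot ℕ))
    (haN : a N = 1) :
    (F - ψ ^ N).degree < ((d - m : ℕ) : WithBot ℕ) ↔ a (N - 1) = 0 := by
  obtain ⟨k, rfl⟩ : ∃ k, N = k + 1 := Nat.exists_eq_add_one.mpr hN
  have hd : d - m = (ψ ^ k).natDegree := by
    have hdm : d = k * m + m := by rw [hm, ← add_one_mul, Nat.mul_div_cancel' hdvd]
    rw [hψ.natDegree_pow, hψd, hdm, Nat.add_sub_cancel]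
  have hsub : F - ψ ^ (k + 1) = ∑ i ∈ range k, a i * ψ ^ i + a k * ψ ^ k := by
    rw [hexp, sum_range_succ, sum_range_succ, haN]
    ring
  have hlower : (∑ i ∈ range k, a i * ψ ^ i).degree < (ψ ^ k).natDegree := by
    rw [hψ.natDegree_pow, hψd]
    exact degree_sum_mul_pow_lt hψd.le fun i hi => hdeg i (by omega)
  rw [hsub, hd, degree_add_lt_iff_of_degree_lt hlower, (hψ.pow k).degree_mul_lt_natDegree_iff,
    Nat.add_sub_cancel]

/-- **Characterisation of the approximate root via the `ψ`-adic expansion.**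
Let `F ∈ A[y]` be monic of degree `d`, `N` a positive divisor of `d`, and `ψ` monic of
degree `m = d / N`. If `F = Σ_{i=0}^{N} a_i ψ^i` is the `ψ`-adic expansion of `F`
(so `deg a_i < m` for `i < N` and `a_N = 1`), then `deg (F - ψ ^ N) < d - m` if and only
if `a_{N-1} = 0`. -/
theorem approximate_root_iff_coeff_vanishes {A : Type*} [CommRing A] [Nontrivial A]
    (F ψ : A[X]) (d N m : ℕ) (a : ℕ → A[X])
    (hF : F.Monic) (hFd : F.natDegree = d) (hN : 0 < N) (hdvd : N ∣ d) (hm : m = d / N)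
    (hψ : ψ.Monic) (hψd : ψ.natDegree = m)
    (hexp : F = ∑ i ∈ Finset.range (N + 1), a i * ψ ^ i)
    (hdeg : ∀ i < N, (a i).degree < (m : WithBot ℕ))
    (haN : a N = 1) :
    (F - ψ ^ N).degree < ((d - m : ℕ) : WithBot ℕ) ↔ a (N - 1) = 0 :=
  approximate_root_iff_coeff_vanishes_general F ψ d N m a hN hdvd hm hψ hψd hexp hdeg haN
end

section
/- Let A be a commutative ring in which the image of a positive integer N is a unit, let F ∈ A[y] be monic of degree d = N·m, and let φ ∈ A[y] be monic of degree m. Write the φ-adic expansion F = Σ_{i=0}^{N} a_i φ^i with deg a_i < m for i < N and a_N = 1, and suppose a_{N−1} ≠ 0. Set φ' := φ + N^{−1}·a_{N−1}, which is again monic of degree m, and write the φ'-adic expansion F = Σ_{i=0}^{N} a'_i φ'^i with deg a'_i < m for i < N and a'_N = 1. Then deg a'_{N−1} < deg a_{N−1} (in the WithBot ℕ ordering, so this includes the possibility a'_{N−1} = 0). -/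
open Polynomial Finset

private lemma deg_le_pred {A : Type*} [CommRing A] {p : A[X]} {m : ℕ}
    (h : p.degree < (m : WithBot ℕ)) (hm : 1 ≤ m) :
    p.degree ≤ ((m - 1 : ℕ) : WithBot ℕ) := by
  rcases eq_or_ne p 0 with rfl | h0
  · simp
  · rw [degree_eq_natDegree h0] at h ⊢
    exact_mod_cast (by exact_mod_cast Nat.lt_iff_le_pred hm |>.mp (by exact_mod_cast h) :
      p.natDegree ≤ m - 1)

/-- **The Tschirnhausen transform strictly decreases the degree of the `(N-1)`-st
coefficient.** Let `A` be a commutative ring in which `N > 0` is a unit, `F` monic of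
degree `d = N * m`, and `φ` monic of degree `m`, with `φ`-adic expansion
`F = Σ a_i φ^i` and `a_{N-1} ≠ 0`. Set `φ' = φ + N⁻¹ • a_{N-1}` and let
`F = Σ a'_i φ'^i` be the `φ'`-adic expansion. Then `deg a'_{N-1} < deg a_{N-1}`. -/
theorem tschirnhausen_degree_lt {A : Type*} [CommRing A]
    (N m d : ℕ) (hN : 0 < N) (hunit : IsUnit (N : A))
    (F φ φ' : A[X]) (a a' : ℕ → A[X])
    (hF : F.Monic) (hFd : F.natDegree = d) (hd : d = N * m)
    (hφ : φ.Monic) (hφd : φ.natDegree = m)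
    (hexp : F = ∑ i ∈ Finset.range (N + 1), a i * φ ^ i)
    (hdeg : ∀ i < N, (a i).degree < (m : WithBot ℕ))
    (haN : a N = 1)
    (hne : a (N - 1) ≠ 0)
    (hφ' : φ' = φ + Polynomial.C (Ring.inverse (N : A)) * a (N - 1))
    (hexp' : F = ∑ i ∈ Finset.range (N + 1), a' i * φ' ^ i)
    (hdeg' : ∀ i < N, (a' i).degree < (m : WithBot ℕ))
    (haN' : a' N = 1) :
    (a' (N - 1)).degree < (a (N - 1)).degree := by
  rcases subsingleton_or_nontrivial A with hs | hs
  · exact absurd (Subsingleton.elim _ _) hne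
  obtain ⟨n, rfl⟩ : ∃ n, N = n + 1 := ⟨N - 1, by omega⟩
  simp only [Nat.add_sub_cancel] at hne hφ' ⊢
  set ε := Polynomial.C (Ring.inverse ((n + 1 : ℕ) : A)) * a n with hε
  set δ := (a n).natDegree with hδ
  have hδdeg : (a n).degree = (δ : WithBot ℕ) := degree_eq_natDegree hne
  have hδm : δ < m := by
    have h := hdeg n (by omega)
    rw [hδdeg, Nat.cast_lt] at h
    exact h
  have hm1 : 1 ≤ m := by omega
  have hεdeg : ε.degree ≤ (δ : WithBot ℕ) := by
    calc ε.degree ≤ 0 + (a n).degree := degree_mul_le_of_le degree_C_le le_rfl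
    _ = (δ : WithBot ℕ) := by rw [zero_add, hδdeg]
  have hφdeg : φ.degree = (m : WithBot ℕ) := by
    rw [degree_eq_natDegree hφ.ne_zero, hφd]
  have hεlt : ε.degree < φ.degree := by
    rw [hφdeg]
    exact lt_of_le_of_lt hεdeg (by exact_mod_cast hδm)
  have hφ'mon : φ'.Monic := by
    rw [hφ']
    exact hφ.add_of_left hεlt
  have hφ'deg : φ'.degree = (m : WithBot ℕ) := by
    rw [hφ', degree_add_eq_left_of_degree_lt hεlt, hφdeg]
  have hφ'nd : φ'.natDegree = m := natDegree_eq_of_degree_eq_some hφ'deg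
  -- the key algebraic identity
  have hcast : ((n + 1 : ℕ) : A[X]) * ε = a n := by
    rw [hε, ← Polynomial.C_eq_natCast, ← mul_assoc, ← Polynomial.C_mul,
      Ring.mul_inverse_cancel _ hunit, Polynomial.C_1, one_mul]
  have e2 : φ' ^ (n + 1) =
      (∑ k ∈ range n, φ ^ k * ε ^ (n + 1 - k) * (((n + 1).choose k : ℕ) : A[X]))
        + a n * φ ^ n + φ ^ (n + 1) := by
    rw [hφ', add_pow, sum_range_succ, sum_range_succ]
    simp only [Nat.choose_self, Nat.choose_succ_self_right, Nat.sub_self, pow_zero,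
      Nat.add_sub_cancel_left, Nat.succ_sub_one, pow_one, Nat.cast_one, mul_one]
    linear_combination φ ^ n * hcast
  have h1 : F = (∑ i ∈ range n, a i * φ ^ i) + a n * φ ^ n + φ ^ (n + 1) := by
    rw [hexp, sum_range_succ, sum_range_succ, haN, one_mul]
  have h1' : F = (∑ i ∈ range n, a' i * φ' ^ i) + a' n * φ' ^ n + φ' ^ (n + 1) := by
    rw [hexp', sum_range_succ, sum_range_succ, haN', one_mul]
  have key : a' n * φ' ^ n =
      (∑ i ∈ range n, a i * φ ^ i) - (∑ i ∈ range n, a' i * φ' ^ i)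
        - ∑ k ∈ range n, φ ^ k * ε ^ (n + 1 - k) * (((n + 1).choose k : ℕ) : A[X]) := by
    linear_combination h1 - h1' - e2
  -- degree bounds
  have bound : ((δ + n * m : ℕ) : WithBot ℕ) ≤ ((δ + n * m : ℕ) : WithBot ℕ) := le_rfl
  have hbS : (∑ i ∈ range n, a i * φ ^ i).degree < ((δ + n * m : ℕ) : WithBot ℕ) := by
    refine lt_of_le_of_lt (degree_sum_le _ _) ?_
    rw [Finset.sup_lt_iff (by exact_mod_cast WithBot.bot_lt_coe _)]
    intro i hi
    rw [Finset.mem_range] at hi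
    have h2 : (a i * φ ^ i).degree ≤ ((m - 1 : ℕ) : WithBot ℕ) + ((i * m : ℕ) : WithBot ℕ) :=
      degree_mul_le_of_le (deg_le_pred (hdeg i (by omega)) hm1)
        (le_of_eq (by rw [degree_eq_natDegree (hφ.pow i).ne_zero, hφ.natDegree_pow, hφd]))
    refine lt_of_le_of_lt h2 ?_
    rw [← Nat.cast_add, Nat.cast_lt]
    have h3 : (i + 1) * m ≤ n * m := Nat.mul_le_mul_right m (by omega)
    have h4 : m + i * m = (i + 1) * m := by ring
    omega
  have hbS' : (∑ i ∈ range n, a' i * φ' ^ i).degree < ((δ + n * m : ℕ) : WithBot ℕ) := by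
    refine lt_of_le_of_lt (degree_sum_le _ _) ?_
    rw [Finset.sup_lt_iff (by exact_mod_cast WithBot.bot_lt_coe _)]
    intro i hi
    rw [Finset.mem_range] at hi
    have h2 : (a' i * φ' ^ i).degree ≤ ((m - 1 : ℕ) : WithBot ℕ) + ((i * m : ℕ) : WithBot ℕ) :=
      degree_mul_le_of_le (deg_le_pred (hdeg' i (by omega)) hm1)
        (le_of_eq (by rw [degree_eq_natDegree (hφ'mon.pow i).ne_zero, hφ'mon.natDegree_pow, hφ'nd]))
    refine lt_of_le_of_lt h2 ?_
    rw [← Nat.cast_add, Nat.cast_lt]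
    have h3 : (i + 1) * m ≤ n * m := Nat.mul_le_mul_right m (by omega)
    have h4 : m + i * m = (i + 1) * m := by ring
    omega
  have hbT : (∑ k ∈ range n, φ ^ k * ε ^ (n + 1 - k) * (((n + 1).choose k : ℕ) : A[X])).degree
      < ((δ + n * m : ℕ) : WithBot ℕ) := by
    refine lt_of_le_of_lt (degree_sum_le _ _) ?_
    rw [Finset.sup_lt_iff (by exact_mod_cast WithBot.bot_lt_coe _)]
    intro k hk
    rw [Finset.mem_range] at hk
    have h2 : (φ ^ k * ε ^ (n + 1 - k) * (((n + 1).choose k : ℕ) : A[X])).degree ≤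
        (((k * m : ℕ) : WithBot ℕ) + ((n + 1 - k : ℕ) : WithBot ℕ) * (δ : WithBot ℕ)) + 0 :=
      degree_mul_le_of_le
        (degree_mul_le_of_le
          (le_of_eq (by rw [degree_eq_natDegree (hφ.pow k).ne_zero, hφ.natDegree_pow, hφd]))
          (degree_pow_le_of_le _ hεdeg))
        (degree_natCast_le _)
    refine lt_of_le_of_lt h2 ?_
    rw [add_zero, ← Nat.cast_mul, ← Nat.cast_add, Nat.cast_lt]
    have hj : n + 1 - k = (n - k) + 1 := by omega
    have h3 : (n - k) * δ < (n - k) * m :=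
      mul_lt_mul_of_pos_left hδm (by omega : 0 < n - k)
    have h4 : k * m + (n - k) * m = n * m := by
      rw [← add_mul]
      congr 1
      omega
    have h5 : (n + 1 - k) * δ = (n - k) * δ + δ := by rw [hj, add_mul, one_mul]
    omega
  have hdegkey : (a' n * φ' ^ n).degree < ((δ + n * m : ℕ) : WithBot ℕ) := by
    rw [key]
    refine lt_of_le_of_lt (degree_sub_le _ _) (max_lt (lt_of_le_of_lt (degree_sub_le _ _)
      (max_lt hbS hbS')) hbT)
  rcases eq_or_ne (a' n) 0 with h0 | h0
  · rw [h0, degree_zero, hδdeg]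
    exact WithBot.bot_lt_coe δ
  · have hmul : (a' n * φ' ^ n).degree = (a' n).degree + ((n * m : ℕ) : WithBot ℕ) := by
      rw [Monic.degree_mul (hφ'mon.pow n),
        degree_eq_natDegree (hφ'mon.pow n).ne_zero, hφ'mon.natDegree_pow, hφ'nd]
    rw [hmul, Nat.cast_add] at hdegkey
    rw [hδdeg]
    exact lt_of_add_lt_add_right hdegkey
end

section
/- Let A be a nontrivial commutative ring in which the image of a positive integer N is a unit, let F ∈ A[y] be monic of degree d = N·m. For a monic φ ∈ A[y] of degree m, define the Tschirnhausen transform τ_F(φ) := φ + N^{−1}·((F /ₘ φ^{N−1}) %ₘ φ), where /ₘ and %ₘ denote quotient and remainder of division by a monic polynomial (so that (F /ₘ φ^{N−1}) %ₘ φ is the coefficient a_{N−1} of the φ-adic expansion of F). Then for every monic φ ∈ A[y] of degree m there exists j ≤ m such that the j-th iterate τ_F^[j](φ) is the N-th approximate root of F, i.e., τ_F^[j](φ) is monic of degree m and deg(F − (τ_F^[j](φ))^N) < d − m. -/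
/-!
Write `N = n + 1`. If `ψ` is monic of degree `m` and `deg (F - ψ ^ N) < n * m + s + 1` with
`s < m`, divide: `F - ψ ^ N = ψ ^ n * Q + R` with `deg R < n * m`, so `deg Q ≤ s < m`. Hence
`F = ψ ^ n * (ψ + Q) + R` is the top of the `ψ`-adic expansion of `F`, its coefficient
`a_{N-1}` is `Q`, and `τ_F ψ = ψ + Q / N`. In `(ψ + Q / N) ^ N` the two leading binomial terms
`ψ ^ N + ψ ^ n * Q` cancel `F` up to `R`, and every other term `ψ ^ k (Q / N) ^ (N - k)`,
`k < n`, has degree at most `k * m + (N - k) * s < n * m + s`. So each application of `τ_F`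
lowers the bound on `deg (F - ψ ^ N)` by one, from `N * m` for `φ` down to `n * m = d - m`
after `m` steps.
-/

open Polynomial

namespace Polynomial

variable {A : Type*} [CommRing A]

noncomputable def tschirnhausen (N : ℕ) (F φ : A[X]) : A[X] :=
  φ + C (Ring.inverse (N : A)) * ((F /ₘ φ ^ (N - 1)) %ₘ φ)

theorem IsMonicOfDegree.degree_eq [Nontrivial A] {p : A[X]} {n : ℕ}
    (hp : IsMonicOfDegree p n) : p.degree = n := by
  rw [degree_eq_natDegree hp.ne_zero, hp.natDegree_eq]

theorem IsMonicOfDegree.degree_sub_lt [Nontrivial A] {p q : A[X]} {n : ℕ}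
    (hp : IsMonicOfDegree p n) (hq : IsMonicOfDegree q n) : (p - q).degree < n :=
  hp.degree_eq ▸ degree_sub_lt_left (hp.degree_eq.trans hq.degree_eq.symm) hp.ne_zero
    (hp.leadingCoeff_eq.trans hq.leadingCoeff_eq.symm)

theorem degree_divByMonic_le_of_le_add {p q : A[X]} (hq : q.Monic) {t : ℕ}
    (hp : p.degree ≤ ↑(q.natDegree + t)) : (p /ₘ q).degree ≤ t := by
  have hpt := natDegree_le_of_degree_le hp
  exact degree_le_of_natDegree_le (by rw [natDegree_divByMonic p hq]; omega)

theorem divByMonic_pow_modByMonic_eq [Nontrivial A] {F ψ : A[X]} (hψ : ψ.Monic) (n : ℕ)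
    (hQ : ((F - ψ ^ (n + 1)) /ₘ ψ ^ n).degree < ψ.degree) :
    (F /ₘ ψ ^ n) %ₘ ψ = (F - ψ ^ (n + 1)) /ₘ ψ ^ n := by
  have hdiv : F /ₘ ψ ^ n = (F - ψ ^ (n + 1)) /ₘ ψ ^ n + ψ :=
    (div_modByMonic_unique _ _ (hψ.pow n)
      ⟨by linear_combination modByMonic_add_div (F - ψ ^ (n + 1)) (ψ ^ n),
        degree_modByMonic_lt _ (hψ.pow n)⟩).1
  rw [hdiv, add_modByMonic, (modByMonic_eq_self_iff hψ).2 hQ, modByMonic_self hψ, add_zero]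

theorem degree_add_pow_sub_pow_sub_lt {ψ e : A[X]} {n m s : ℕ} (hψ : ψ.degree ≤ m)
    (he : e.degree ≤ s) (hs : s < m) :
    ((ψ + e) ^ (n + 1) - ψ ^ (n + 1) - ((n + 1 : ℕ) : A[X]) * ψ ^ n * e).degree
      < ↑(m * n + s) := by
  have hexpand : (ψ + e) ^ (n + 1) - ψ ^ (n + 1) - ((n + 1 : ℕ) : A[X]) * ψ ^ n * e =
      ∑ k ∈ Finset.range n, ψ ^ k * e ^ (n + 1 - k) * ((n + 1).choose k : A[X]) := by
    rw [add_pow, Finset.sum_range_succ, Finset.sum_range_succ]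
    simp only [Nat.choose_succ_self_right, Nat.choose_self, Nat.sub_self,
      Nat.add_sub_cancel_left, pow_zero, pow_one, Nat.cast_one, mul_one]
    ring
  rw [hexpand]
  refine (degree_sum_le _ _).trans_lt ((Finset.sup_lt_iff (WithBot.bot_lt_coe _)).2 ?_)
  intro k hk
  obtain ⟨r, rfl⟩ := Nat.exists_eq_add_of_lt (Finset.mem_range.1 hk)
  have hterm := degree_mul_le_of_le (degree_mul_le_of_le (degree_pow_le_of_le k hψ)
    (degree_pow_le_of_le (k + r + 1 + 1 - k) he)) (degree_natCast_le ((k + r + 1 + 1).choose k))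
  refine hterm.trans_lt ?_
  rw [show k + r + 1 + 1 - k = r + 2 by omega, add_zero]
  norm_cast
  nlinarith

theorem tschirnhausen_step [Nontrivial A] {n m s : ℕ} {F ψ : A[X]}
    (hunit : IsUnit ((n + 1 : ℕ) : A)) (hψ : IsMonicOfDegree ψ m) (hs : s < m)
    (hF : (F - ψ ^ (n + 1)).degree < ↑(m * n + (s + 1))) :
    IsMonicOfDegree (tschirnhausen (n + 1) F ψ) m ∧
      (F - tschirnhausen (n + 1) F ψ ^ (n + 1)).degree < ↑(m * n + s) := by
  set Q := (F - ψ ^ (n + 1)) /ₘ ψ ^ n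
  set e := C (Ring.inverse ((n + 1 : ℕ) : A)) * Q with he
  have hψn := hψ.pow n
  have hQs : Q.degree ≤ s :=
    degree_divByMonic_le_of_le_add hψn.monic (hψn.natDegree_eq ▸ Order.le_of_lt_succ hF)
  have hes : e.degree ≤ s := by
    rw [he, ← smul_eq_C_mul]
    exact (degree_smul_le _ _).trans hQs
  have hNe : ((n + 1 : ℕ) : A[X]) * e = Q := by
    rw [he, ← mul_assoc, ← C_eq_natCast, ← C_mul, Ring.mul_inverse_cancel _ hunit, C_1,
      one_mul]
  have hτ : tschirnhausen (n + 1) F ψ = ψ + e := by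
    rw [tschirnhausen, Nat.add_sub_cancel, divByMonic_pow_modByMonic_eq hψ.monic n
      (hψ.degree_eq ▸ hQs.trans_lt (by exact_mod_cast hs))]
  have hrem : F - (ψ + e) ^ (n + 1) = (F - ψ ^ (n + 1)) %ₘ ψ ^ n -
      ((ψ + e) ^ (n + 1) - ψ ^ (n + 1) - ((n + 1 : ℕ) : A[X]) * ψ ^ n * e) := by
    linear_combination -modByMonic_add_div (F - ψ ^ (n + 1)) (ψ ^ n) - ψ ^ n * hNe
  rw [hτ, hrem]
  refine ⟨hψ.add_right ((natDegree_le_of_degree_le hes).trans_lt hs), ?_⟩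
  refine (degree_sub_le _ _).trans_lt
    (max_lt ?_ (degree_add_pow_sub_pow_sub_lt hψ.degree_eq.le hes hs))
  refine (degree_modByMonic_lt _ hψn.monic).trans_le ?_
  rw [hψn.degree_eq]
  exact_mod_cast Nat.le_add_right _ _

theorem tschirnhausen_iterate [Nontrivial A] {n m : ℕ} {F φ : A[X]}
    (hunit : IsUnit ((n + 1 : ℕ) : A)) (hφ : IsMonicOfDegree φ m)
    (hF : (F - φ ^ (n + 1)).degree < ↑(m * n + m)) {j : ℕ} (hj : j ≤ m) :
    IsMonicOfDegree ((tschirnhausen (n + 1) F)^[j] φ) m ∧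
      (F - (tschirnhausen (n + 1) F)^[j] φ ^ (n + 1)).degree < ↑(m * n + (m - j)) := by
  induction j with
  | zero => exact ⟨hφ, hF⟩
  | succ j ih =>
    obtain ⟨hψ, hψF⟩ := ih (by omega)
    rw [Function.iterate_succ_apply', show m - (j + 1) = m - j - 1 by omega]
    exact tschirnhausen_step hunit hψ (by omega) (by rwa [show m - j - 1 + 1 = m - j by omega])

end Polynomial

/-- **Iterating the Tschirnhausen transform reaches the approximate root in at most `m`
steps.** Let `A` be a nontrivial commutative ring in which `N > 0` is a unit and `F`
monic of degree `d = N * m`. For monic `φ` of degree `m` define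
`τ_F φ = φ + C (N⁻¹) * ((F /ₘ φ ^ (N - 1)) %ₘ φ)`. Then for every monic `φ` of degree
`m` there is `j ≤ m` such that `τ_F^[j] φ` is the `N`-th approximate root of `F`. -/
theorem tschirnhausen_iterate_approximate_root {A : Type*} [CommRing A] [Nontrivial A]
    (N m d : ℕ) (hN : 0 < N) (hunit : IsUnit (N : A))
    (F : A[X]) (hF : F.Monic) (hFd : F.natDegree = d) (hd : d = N * m)
    (φ : A[X]) (hφ : φ.Monic) (hφd : φ.natDegree = m) :
    ∃ j ≤ m,
      ((fun p : A[X] => p + Polynomial.C (Ring.inverse (N : A)) *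
          ((F /ₘ p ^ (N - 1)) %ₘ p))^[j] φ).Monic ∧
      ((fun p : A[X] => p + Polynomial.C (Ring.inverse (N : A)) *
          ((F /ₘ p ^ (N - 1)) %ₘ p))^[j] φ).natDegree = m ∧
      (F - ((fun p : A[X] => p + Polynomial.C (Ring.inverse (N : A)) *
          ((F /ₘ p ^ (N - 1)) %ₘ p))^[j] φ) ^ N).degree < ((d - m : ℕ) : WithBot ℕ) := by
  obtain ⟨n, rfl⟩ : ∃ n, N = n + 1 := ⟨N - 1, by omega⟩
  subst hd
  have hFm : IsMonicOfDegree F (m * (n + 1)) := ⟨by rw [hFd, mul_comm], hF⟩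
  have hφm : IsMonicOfDegree φ m := ⟨hφd, hφ⟩
  obtain ⟨hτ, hτF⟩ := tschirnhausen_iterate hunit hφm
    (by simpa [mul_add] using hFm.degree_sub_lt (hφm.pow (n + 1))) le_rfl
  have hdm : (n + 1) * m - m = m * n + (m - m) := by
    rw [Nat.sub_self, add_zero, add_mul, one_mul, Nat.add_sub_cancel, mul_comm]
  exact ⟨m, le_rfl, hτ.monic, hτ.natDegree_eq, hdm ▸ hτF⟩
end

section
/- Let A be a nontrivial commutative ring, let F ∈ A[y] be monic of degree d, and let N be a positive divisor of d whose image in A is a unit; set m := d/N. Let G ∈ A⟦y⟧ be the reversal of F, i.e., the power series whose coefficient of y^j is the coefficient of y^{d−j} in F (so G has constant coefficient 1 since F is monic), and let S ∈ A⟦y⟧ be the unique power series with constant coefficient 1 satisfying S^N = G. Then the polynomial ψ := Σ_{i=0}^{m} s_{m−i}·y^i, where s_j denotes the coefficient of y^j in S, is the N-th approximate root of F: it is monic of degree m and deg(F − ψ^N) < d − m. -/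
/-!
Write `T` for the truncation of `S` below degree `m + 1` and `ψ` for its reversal `y ^ m T(1/y)`.
Since `m N = d`, `ψ ^ N` is the degree-`d` reversal of `T ^ N`, and `F` is the degree-`d` reversal
of `G = S ^ N`. Hence `F - ψ ^ N` is the reversal of `G - T ^ N`, which vanishes to order `m + 1`
because `T ≡ S` modulo `y ^ (m + 1)`; reversing turns that vanishing into `deg (F - ψ ^ N) < d - m`.
-/

open Polynomial Finset

namespace Polynomial

variable {R : Type*} [Semiring R]

theorem reflect_mul_pow (f : R[X]) {M : ℕ} (hf : f.natDegree ≤ M) (n : ℕ) :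
    reflect (M * n) (f ^ n) = reflect M f ^ n := by
  induction n with
  | zero => simp
  | succ n ih =>
    have hfn : (f ^ n).natDegree ≤ M * n :=
      (natDegree_pow_le_of_le n hf).trans_eq (mul_comm n M)
    rw [pow_succ, pow_succ, ← ih, Nat.mul_succ, reflect_mul _ _ hfn hf]

theorem degree_reflect_lt_of_coeff_eq_zero {p : R[X]} {d n : ℕ} (hp : p.natDegree ≤ d)
    (hcoeff : ∀ j ≤ n, p.coeff j = 0) : (reflect d p).degree < ((d - n : ℕ) : WithBot ℕ) := by
  refine degree_lt_iff_coeff_zero _ _ |>.mpr fun k hk => ?_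
  have hk : d - n ≤ k := by exact_mod_cast hk
  rw [coeff_reflect]
  rcases le_or_gt k d with hkd | hdk
  · exact hcoeff _ (by rw [revAt_le hkd]; omega)
  · rw [revAt_eq_self_of_lt hdk]
    exact coeff_eq_zero_of_natDegree_lt (hp.trans_lt hdk)

end Polynomial

namespace PowerSeries

variable {R : Type*} [CommSemiring R]

theorem coeff_trunc_pow_of_lt (f : PowerSeries R) (a : ℕ) {n j : ℕ} (h : j < n) :
    ((trunc n f) ^ a).coeff j = coeff j (f ^ a) := by
  rw [← coeff_coe_trunc_of_lt h, ← trunc_trunc_pow, coeff_coe_trunc_of_lt h, ← Polynomial.coe_pow,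
    Polynomial.coeff_coe]

theorem sum_range_C_coeff_mul_X_pow (f : PowerSeries R) (m : ℕ) :
    ∑ i ∈ range (m + 1), Polynomial.C (coeff (m - i) f) * Polynomial.X ^ i
      = reflect m (trunc (m + 1) f) := by
  ext k
  simp only [finsetSum_coeff, Polynomial.coeff_C_mul_X_pow, sum_ite_eq, mem_range, coeff_reflect,
    coeff_trunc]
  rcases le_or_gt k m with hk | hk
  · rw [revAt_le hk, if_pos (by omega), if_pos (by omega)]
  · rw [revAt_eq_self_of_lt hk, if_neg (by omega), if_neg (by omega)]

theorem natDegree_reflect_trunc_le (f : PowerSeries R) (m : ℕ) :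
    (reflect m (trunc (m + 1) f)).natDegree ≤ m :=
  natDegree_reflect_le.trans (max_le le_rfl (Nat.lt_succ_iff.mp (natDegree_trunc_lt f m)))

theorem coeff_reflect_trunc_self (f : PowerSeries R) (m : ℕ) :
    (reflect m (trunc (m + 1) f)).coeff m = constantCoeff f := by
  rw [coeff_reflect, revAt_le le_rfl, Nat.sub_self, coeff_trunc, if_pos m.succ_pos,
    coeff_zero_eq_constantCoeff_apply]

theorem coe_reflect_eq_of_coeff_eq {F : R[X]} {d : ℕ} (hF : F.natDegree ≤ d) {G : PowerSeries R}
    (hG : ∀ j, coeff j G = if j ≤ d then F.coeff (d - j) else 0) :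
    (reflect d F : PowerSeries R) = G := by
  ext j
  rw [Polynomial.coeff_coe, coeff_reflect, hG]
  rcases le_or_gt j d with hj | hj
  · rw [revAt_le hj, if_pos hj]
  · rw [revAt_eq_self_of_lt hj, if_neg hj.not_ge, coeff_eq_zero_of_natDegree_lt (hF.trans_lt hj)]

end PowerSeries

theorem approximate_root_from_reversal_general {A : Type*} [CommRing A] [Nontrivial A]
    (F : A[X]) (d N m : ℕ) (hFd : F.natDegree = d)
    (hdvd : N ∣ d) (hm : m = d / N)
    (G S : PowerSeries A)
    (hG : ∀ j : ℕ, PowerSeries.coeff j G = if j ≤ d then F.coeff (d - j) else 0)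
    (hS1 : PowerSeries.constantCoeff S = 1) (hSN : S ^ N = G) :
    (∑ i ∈ Finset.range (m + 1),
        Polynomial.C (PowerSeries.coeff (m - i) S) * Polynomial.X ^ i).Monic ∧
    (∑ i ∈ Finset.range (m + 1),
        Polynomial.C (PowerSeries.coeff (m - i) S) * Polynomial.X ^ i).natDegree = m ∧
    (F - (∑ i ∈ Finset.range (m + 1),
        Polynomial.C (PowerSeries.coeff (m - i) S) * Polynomial.X ^ i) ^ N).degree
      < ((d - m : ℕ) : WithBot ℕ) := by
  have hmN : m * N = d := by rw [hm, Nat.div_mul_cancel hdvd]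
  set T := PowerSeries.trunc (m + 1) S
  have hTdeg : T.natDegree ≤ m := Nat.lt_succ_iff.mp (PowerSeries.natDegree_trunc_lt S m)
  have hTNdeg : (T ^ N).natDegree ≤ d :=
    hmN ▸ (natDegree_pow_le_of_le N hTdeg).trans_eq (mul_comm N m)
  have hFrev : (reflect d F).natDegree ≤ d := natDegree_reflect_le.trans (max_le le_rfl hFd.le)
  rw [PowerSeries.sum_range_C_coeff_mul_X_pow]
  have hψm : (reflect m T).coeff m = 1 := by rw [PowerSeries.coeff_reflect_trunc_self, hS1]
  refine ⟨monic_of_natDegree_le_of_coeff_eq_one m (PowerSeries.natDegree_reflect_trunc_le S m) hψm,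
    natDegree_eq_of_le_of_coeff_ne_zero (PowerSeries.natDegree_reflect_trunc_le S m)
      (hψm ▸ one_ne_zero), ?_⟩
  rw [← reflect_mul_pow T hTdeg, hmN, ← reflect_reflect (p := F) (N := d), ← reflect_sub]
  refine degree_reflect_lt_of_coeff_eq_zero ?_ fun j hj => ?_
  · exact (natDegree_sub_le_of_le hFrev hTNdeg).trans (max_self d).le
  · rw [coeff_sub, sub_eq_zero, ← Polynomial.coeff_coe,
      PowerSeries.coe_reflect_eq_of_coeff_eq hFd.le hG, ← hSN,
      PowerSeries.coeff_trunc_pow_of_lt S N (Nat.lt_succ_of_le hj)]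

/-- **Computing the approximate root via an `N`-th root of the reversal.**
Let `F ∈ A[y]` be monic of degree `d`, `N` a positive divisor of `d` which is a unit in
`A`, and `m = d / N`. Let `G ∈ A⟦y⟧` be the reversal of `F` (coefficient of `y^j` is
the coefficient of `y^(d-j)` of `F` for `j ≤ d`, and `0` for `j > d`) and let `S` be
the unique power series with constant coefficient `1` and `S ^ N = G`. Then
`ψ = Σ_{i=0}^{m} s_{m-i} y^i` is the `N`-th approximate root of `F`. -/
theorem approximate_root_from_reversal {A : Type*} [CommRing A] [Nontrivial A]
    (F : A[X]) (d N m : ℕ) (hF : F.Monic) (hFd : F.natDegree = d)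
    (hN : 0 < N) (hdvd : N ∣ d) (hunit : IsUnit (N : A)) (hm : m = d / N)
    (G S : PowerSeries A)
    (hG : ∀ j : ℕ, PowerSeries.coeff j G = if j ≤ d then F.coeff (d - j) else 0)
    (hS1 : PowerSeries.constantCoeff S = 1) (hSN : S ^ N = G) :
    (∑ i ∈ Finset.range (m + 1),
        Polynomial.C (PowerSeries.coeff (m - i) S) * Polynomial.X ^ i).Monic ∧
    (∑ i ∈ Finset.range (m + 1),
        Polynomial.C (PowerSeries.coeff (m - i) S) * Polynomial.X ^ i).natDegree = m ∧
    (F - (∑ i ∈ Finset.range (m + 1),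
        Polynomial.C (PowerSeries.coeff (m - i) S) * Polynomial.X ^ i) ^ N).degree
      < ((d - m : ℕ) : WithBot ℕ) :=
  approximate_root_from_reversal_general F d N m hFd hdvd hm G S hG hS1 hSN
end

section
/- Let K be a perfect field of characteristic 0 or of characteristic greater than d, and let F ∈ K⟦x⟧[y] be a square-free Weierstrass polynomial of degree d ≥ 1 in y. Then x^{d−1} divides the resultant Res_y(F, ∂F/∂y) in K⟦x⟧. Equivalently, the x-adic valuation v_F of the discriminant of F satisfies d − 1 ≤ v_F. -/
/-!
Reduced modulo `x`, the Weierstrass condition kills the coefficients of `y^i` for `i < d` in `F`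
and for `i < d - 1` in `∂F/∂y`. Every entry of the first `d - 1` columns of the Sylvester matrix
is such a coefficient or zero, so each term of the Leibniz expansion of its determinant is
divisible by `x^(d-1)`.
-/

open Polynomial

/-- The Sylvester matrix of two polynomials `p`, `q` relative to the sizes
`m` (for `p`) and `n` (for `q`): a square matrix of size `m + n` whose first `n` rows
carry the shifted coefficients of `p` and whose last `m` rows carry the shifted
coefficients of `q`. -/
noncomputable def sylvesterMatrix {R : Type*} [CommRing R] (m n : ℕ) (p q : R[X]) :
    Matrix (Fin (m + n)) (Fin (m + n)) R :=
  Matrix.of fun i j =>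
    if (i : ℕ) < n then
      (if (i : ℕ) ≤ (j : ℕ) ∧ (j : ℕ) ≤ (i : ℕ) + m then p.coeff ((j : ℕ) - (i : ℕ)) else 0)
    else
      (if (i : ℕ) - n ≤ (j : ℕ) ∧ (j : ℕ) ≤ ((i : ℕ) - n) + n then
        q.coeff ((j : ℕ) - ((i : ℕ) - n)) else 0)

/-- The resultant `Res_y(p, q)` of two polynomials, as the determinant of their
Sylvester matrix. -/
noncomputable def resultant {R : Type*} [CommRing R] (p q : R[X]) : R :=
  (sylvesterMatrix p.natDegree q.natDegree p q).det

theorem Matrix.pow_card_dvd_det_of_dvd_col {ι R : Type*} [Fintype ι] [DecidableEq ι] [CommRing R]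
    (A : Matrix ι ι R) (a : R) (s : Finset ι) (h : ∀ j ∈ s, ∀ i, a ∣ A i j) :
    a ^ s.card ∣ A.det := by
  rw [Matrix.det_apply]
  refine Finset.dvd_sum fun σ _ => ?_
  rw [Units.smul_def, zsmul_eq_mul]
  refine Dvd.dvd.mul_left (Dvd.dvd.trans ?_ (Finset.prod_dvd_prod_of_subset s _ _
    (Finset.subset_univ s))) _
  rw [← Finset.prod_const]
  exact Finset.prod_dvd_prod_of_dvd _ _ fun j hj => h j hj (σ j)

theorem dvd_sylvesterMatrix_of_dvd_coeff {R : Type*} [CommRing R] {p q : R[X]} {a : R} {k : ℕ}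
    (hp : ∀ i < k, a ∣ p.coeff i) (hq : ∀ i < k, a ∣ q.coeff i) (m n : ℕ)
    (i j : Fin (m + n)) (hj : (j : ℕ) < k) : a ∣ sylvesterMatrix m n p q i j := by
  simp only [sylvesterMatrix, Matrix.of_apply]
  split_ifs
  · exact hp _ (by omega)
  · exact dvd_zero a
  · exact hq _ (by omega)
  · exact dvd_zero a

theorem pow_dvd_resultant_of_dvd_coeff {R : Type*} [CommRing R] {p q : R[X]} {a : R} {k : ℕ}
    (hk : k ≤ p.natDegree + q.natDegree)
    (hp : ∀ i < k, a ∣ p.coeff i) (hq : ∀ i < k, a ∣ q.coeff i) :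
    a ^ k ∣ _root_.resultant p q := by
  have hcard : (Finset.univ.filter fun j : Fin (p.natDegree + q.natDegree) => (j : ℕ) < k).card
      = k := by
    rw [Fin.card_filter_val_lt, min_eq_right hk]
  rw [_root_.resultant, ← hcard]
  exact Matrix.pow_card_dvd_det_of_dvd_col _ a _ fun j hj i =>
    dvd_sylvesterMatrix_of_dvd_coeff hp hq _ _ i j (Finset.mem_filter.mp hj).2

theorem dvd_coeff_derivative_of_dvd_coeff {R : Type*} [CommRing R] {p : R[X]} {a : R} {k : ℕ}
    (hp : ∀ i < k, a ∣ p.coeff i) (i : ℕ) (hi : i + 1 < k) : a ∣ (derivative p).coeff i := by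
  rw [coeff_derivative]
  exact (hp (i + 1) hi).mul_right _

theorem discriminant_valuation_ge_of_weierstrass_general {K : Type*} [Field K]
    (d : ℕ)
    (F : Polynomial (PowerSeries K))
    (hdeg : F.natDegree = d)
    (hweier : ∀ i < d, PowerSeries.constantCoeff (F.coeff i) = 0) :
    (PowerSeries.X : PowerSeries K) ^ (d - 1) ∣
      _root_.resultant F (Polynomial.derivative F) := by
  have hX : ∀ i < d, PowerSeries.X ∣ F.coeff i := fun i hi =>
    PowerSeries.X_dvd_iff.mpr (hweier i hi)
  exact pow_dvd_resultant_of_dvd_coeff (by omega) (fun i hi => hX i (by omega))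
    (fun i hi => dvd_coeff_derivative_of_dvd_coeff hX i (by omega))

/-- **Lower bound for the discriminant valuation of a square-free Weierstrass
polynomial.** Let `K` be a perfect field of characteristic `0` or `> d` and let
`F ∈ K⟦x⟧[y]` be a square-free Weierstrass polynomial of degree `d ≥ 1`. Then
`x^(d-1)` divides the resultant `Res_y(F, ∂F/∂y)` in `K⟦x⟧`, i.e. the discriminant
valuation `v_F` of `F` satisfies `d - 1 ≤ v_F`. -/
theorem discriminant_valuation_ge_of_weierstrass {K : Type*} [Field K] [PerfectField K]
    (d : ℕ) (hchar : ringChar K = 0 ∨ d < ringChar K)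
    (F : Polynomial (PowerSeries K)) (hd : 1 ≤ d)
    (hmonic : F.Monic) (hdeg : F.natDegree = d)
    (hweier : ∀ i < d, PowerSeries.constantCoeff (F.coeff i) = 0)
    (hsqf : Squarefree F) :
    (PowerSeries.X : PowerSeries K) ^ (d - 1) ∣
      _root_.resultant F (Polynomial.derivative F) :=
  discriminant_valuation_ge_of_weierstrass_general d F hdeg hweier
end
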